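/- For every positive integer n, the domination polynomial of the book graph B_n is D(B_n,x) = (x^2+2x)^n·(2x+1) + x^2·(x+1)^{2n} − 2x^n. -/
import Mathlib


open Polynomial

/-- `S` is a dominating set of the graph `G`: every vertex not in `S` has a neighbor in `S`. -/
def SimpleGraph.IsDomSet {V : Type*} (G : SimpleGraph V) (S : Finset V) : Prop :=
  ∀ v : V, v ∈ S ∨ ∃ u ∈ S, G.Adj u v

open Classical in
/-- The domination polynomial of a finite graph `G`:
`D(G,x) = ∑ d(G,i) xⁱ` where `d(G,i)` is the number of dominating sets of size `i`. -/
noncomputable def domPoly {V : Type*} [Fintype V] (G : SimpleGraph V) : Polynomial ℂ :=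
  ∑ S ∈ Finset.univ.filter (fun S : Finset V => G.IsDomSet S), X ^ S.card

/-- The book graph `B_n`: `n` quadrilaterals sharing a common edge `u₁u₂`.
Vertices: `inl 0 = u₁`, `inl 1 = u₂`, `inr (i,0) = vᵢ`, `inr (i,1) = wᵢ`;
edges `u₁u₂`, `u₁vᵢ`, `u₂wᵢ`, `vᵢwᵢ`. -/
def bookGraph (n : ℕ) : SimpleGraph (Fin 2 ⊕ (Fin n × Fin 2)) :=
  SimpleGraph.fromRel (fun a b =>
    (a = Sum.inl 0 ∧ b = Sum.inl 1) ∨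
    (∃ i, a = Sum.inl 0 ∧ b = Sum.inr (i, 0)) ∨
    (∃ i, a = Sum.inl 1 ∧ b = Sum.inr (i, 1)) ∨
    (∃ i, a = Sum.inr (i, 0) ∧ b = Sum.inr (i, 1)))

namespace BookAux
open Finset
variable {n : ℕ}

lemma adj_inl0 (u : Fin 2 ⊕ (Fin n × Fin 2)) :
    (bookGraph n).Adj u (Sum.inl 0) ↔ u = Sum.inl 1 ∨ ∃ i, u = Sum.inr (i, 0) := by
  simp only [bookGraph, SimpleGraph.fromRel_adj]
  constructor
  · rintro ⟨h, h1 | h2⟩ <;> aesop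
  · rintro (rfl | ⟨i, rfl⟩) <;> simp

lemma adj_inl1 (u : Fin 2 ⊕ (Fin n × Fin 2)) :
    (bookGraph n).Adj u (Sum.inl 1) ↔ u = Sum.inl 0 ∨ ∃ i, u = Sum.inr (i, 1) := by
  simp only [bookGraph, SimpleGraph.fromRel_adj]
  constructor
  · rintro ⟨h, h1 | h2⟩ <;> aesop
  · rintro (rfl | ⟨i, rfl⟩) <;> simp

lemma adj_inr0 (i : Fin n) (u : Fin 2 ⊕ (Fin n × Fin 2)) :
    (bookGraph n).Adj u (Sum.inr (i, 0)) ↔ u = Sum.inl 0 ∨ u = Sum.inr (i, 1) := by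
  simp only [bookGraph, SimpleGraph.fromRel_adj]
  constructor
  · rintro ⟨h, h1 | h2⟩ <;> aesop
  · rintro (rfl | rfl) <;> simp

lemma adj_inr1 (i : Fin n) (u : Fin 2 ⊕ (Fin n × Fin 2)) :
    (bookGraph n).Adj u (Sum.inr (i, 1)) ↔ u = Sum.inl 1 ∨ u = Sum.inr (i, 0) := by
  simp only [bookGraph, SimpleGraph.fromRel_adj]
  constructor
  · rintro ⟨h, h1 | h2⟩ <;> aesop
  · rintro (rfl | rfl) <;> simp

/-- encoding map -/
noncomputable def Phi (A : Finset (Fin 2)) (f : Fin n → Finset (Fin 2)) :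
    Finset (Fin 2 ⊕ (Fin n × Fin 2)) :=
  A.disjSum (Finset.univ.filter fun p => p.2 ∈ f p.1)

noncomputable def Psi (S : Finset (Fin 2 ⊕ (Fin n × Fin 2))) :
    Finset (Fin 2) × (Fin n → Finset (Fin 2)) :=
  (S.toLeft, fun k => Finset.univ.filter fun j => Sum.inr (k, j) ∈ S)

@[simp] lemma inl_mem_Phi (A : Finset (Fin 2)) (f : Fin n → Finset (Fin 2)) (a : Fin 2) :
    Sum.inl a ∈ Phi A f ↔ a ∈ A := by simp [Phi]

@[simp] lemma inr_mem_Phi (A : Finset (Fin 2)) (f : Fin n → Finset (Fin 2)) (p : Fin n × Fin 2) :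
    Sum.inr p ∈ Phi A f ↔ p.2 ∈ f p.1 := by simp [Phi]

lemma Phi_Psi (S : Finset (Fin 2 ⊕ (Fin n × Fin 2))) : Phi (Psi S).1 (Psi S).2 = S := by
  ext x
  cases x with
  | inl a => simp [Psi]
  | inr p => simp [Psi]

lemma Psi_Phi (A : Finset (Fin 2)) (f : Fin n → Finset (Fin 2)) : Psi (Phi A f) = (A, f) := by
  refine Prod.ext ?_ ?_
  · ext a; simp [Psi]
  · funext k; ext j; simp [Psi]

lemma card_Phi (A : Finset (Fin 2)) (f : Fin n → Finset (Fin 2)) :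
    (Phi A f).card = A.card + ∑ k, (f k).card := by
  rw [Phi, Finset.card_disjSum]
  congr 1
  rw [Finset.card_filter, Fintype.sum_prod_type]
  simp [Finset.card_filter]

def Cond (A : Finset (Fin 2)) (f : Fin n → Finset (Fin 2)) : Prop :=
  ((0 : Fin 2) ∈ A ∨ (1 : Fin 2) ∈ A ∨ ∃ i, (0 : Fin 2) ∈ f i) ∧
  ((0 : Fin 2) ∈ A ∨ (1 : Fin 2) ∈ A ∨ ∃ i, (1 : Fin 2) ∈ f i) ∧
  (∀ i, (0 : Fin 2) ∈ f i ∨ (0 : Fin 2) ∈ A ∨ (1 : Fin 2) ∈ f i) ∧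
  (∀ i, (1 : Fin 2) ∈ f i ∨ (1 : Fin 2) ∈ A ∨ (0 : Fin 2) ∈ f i)

lemma isDomSet_Phi (A : Finset (Fin 2)) (f : Fin n → Finset (Fin 2)) :
    (bookGraph n).IsDomSet (Phi A f) ↔ Cond A f := by
  unfold SimpleGraph.IsDomSet Cond
  rw [Sum.forall]
  constructor
  · rintro ⟨h2, hp⟩
    refine ⟨?_, ?_, fun i => ?_, fun i => ?_⟩
    · rcases h2 0 with h | ⟨u, hu, hadj⟩
      · exact Or.inl (by simpa using h)
      · rw [adj_inl0] at hadj
        rcases hadj with rfl | ⟨i, rfl⟩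
        · exact Or.inr (Or.inl (by simpa using hu))
        · exact Or.inr (Or.inr ⟨i, by simpa using hu⟩)
    · rcases h2 1 with h | ⟨u, hu, hadj⟩
      · exact Or.inr (Or.inl (by simpa using h))
      · rw [adj_inl1] at hadj
        rcases hadj with rfl | ⟨i, rfl⟩
        · exact Or.inl (by simpa using hu)
        · exact Or.inr (Or.inr ⟨i, by simpa using hu⟩)
    · rcases hp (i, 0) with h | ⟨u, hu, hadj⟩
      · exact Or.inl (by simpa using h)
      · rw [adj_inr0] at hadj
        rcases hadj with rfl | rfl
        · exact Or.inr (Or.inl (by simpa using hu))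
        · exact Or.inr (Or.inr (by simpa using hu))
    · rcases hp (i, 1) with h | ⟨u, hu, hadj⟩
      · exact Or.inl (by simpa using h)
      · rw [adj_inr1] at hadj
        rcases hadj with rfl | rfl
        · exact Or.inr (Or.inl (by simpa using hu))
        · exact Or.inr (Or.inr (by simpa using hu))
  · rintro ⟨h1, h2, h3, h4⟩
    constructor
    · intro a
      match a with
      | 0 =>
        rcases h1 with h | h | ⟨i, h⟩
        · exact Or.inl (by simpa using h)
        · exact Or.inr ⟨Sum.inl 1, by simpa using h, by rw [adj_inl0]; simp⟩
        · exact Or.inr ⟨Sum.inr (i, 0), by simpa using h, by rw [adj_inl0]; exact Or.inr ⟨i, rfl⟩⟩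
      | 1 =>
        rcases h2 with h | h | ⟨i, h⟩
        · exact Or.inr ⟨Sum.inl 0, by simpa using h, by rw [adj_inl1]; simp⟩
        · exact Or.inl (by simpa using h)
        · exact Or.inr ⟨Sum.inr (i, 1), by simpa using h, by rw [adj_inl1]; exact Or.inr ⟨i, rfl⟩⟩
    · rintro ⟨i, j⟩
      match j with
      | 0 =>
        rcases h3 i with h | h | h
        · exact Or.inl (by simpa using h)
        · exact Or.inr ⟨Sum.inl 0, by simpa using h, by rw [adj_inr0]; simp⟩
        · exact Or.inr ⟨Sum.inr (i, 1), by simpa using h, by rw [adj_inr0]; simp⟩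
      | 1 =>
        rcases h4 i with h | h | h
        · exact Or.inl (by simpa using h)
        · exact Or.inr ⟨Sum.inl 1, by simpa using h, by rw [adj_inr1]; simp⟩
        · exact Or.inr ⟨Sum.inr (i, 0), by simpa using h, by rw [adj_inr1]; simp⟩

def t0 : Finset (Finset (Fin 2)) := {{0}, {1}, {0, 1}}

lemma mem_t0 (s : Finset (Fin 2)) : s ∈ t0 ↔ (0 : Fin 2) ∈ s ∨ (1 : Fin 2) ∈ s := by
  revert s; decide

lemma sum_pi (n : ℕ) (t : Finset (Finset (Fin 2))) :
    ∑ f ∈ Fintype.piFinset (fun _ : Fin n => t), ∏ k, (X : ℂ[X]) ^ (f k).card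
      = (∑ s ∈ t, (X : ℂ[X]) ^ s.card) ^ n :=
  (Finset.sum_pow' t (fun s => X ^ s.card) n).symm

lemma filter_pi (n : ℕ) (t : Finset (Finset (Fin 2)))
    [DecidablePred fun f : Fin n → Finset (Fin 2) => ∀ k, f k ∈ t] :
    Finset.univ.filter (fun f : Fin n → Finset (Fin 2) => ∀ k, f k ∈ t)
      = Fintype.piFinset (fun _ => t) := by
  ext f; simp [Fintype.mem_piFinset]

lemma hQ : (∑ s ∈ t0, (X : ℂ[X]) ^ s.card) = X ^ 2 + 2 * X := by
  rw [t0, Finset.sum_insert (by decide), Finset.sum_insert (by decide), Finset.sum_singleton]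
  norm_num
  ring

lemma hR : (∑ s : Finset (Fin 2), (X : ℂ[X]) ^ s.card) = (X + 1) ^ 2 := by
  rw [show (Finset.univ : Finset (Finset (Fin 2))) = {∅, {0}, {1}, {0,1}} by decide,
    Finset.sum_insert (by decide), Finset.sum_insert (by decide), Finset.sum_insert (by decide),
    Finset.sum_singleton]
  norm_num
  ring

lemma cond_01 (f : Fin n → Finset (Fin 2)) : Cond {0, 1} f :=
  ⟨Or.inl (by decide), Or.inl (by decide), fun i => Or.inr (Or.inl (by decide)),
    fun i => Or.inr (Or.inl (by decide))⟩

lemma cond_0 (f : Fin n → Finset (Fin 2)) : Cond {0} f ↔ ∀ k, f k ∈ t0 := by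
  simp only [Cond, mem_t0]
  constructor
  · rintro ⟨-, -, -, h4⟩ k
    rcases h4 k with h | h | h
    exacts [Or.inr h, absurd h (by decide), Or.inl h]
  · intro h
    refine ⟨Or.inl (by decide), Or.inl (by decide), fun i => Or.inr (Or.inl (by decide)),
      fun i => ?_⟩
    rcases h i with h | h
    exacts [Or.inr (Or.inr h), Or.inl h]

lemma cond_1 (f : Fin n → Finset (Fin 2)) : Cond {1} f ↔ ∀ k, f k ∈ t0 := by
  simp only [Cond, mem_t0]
  constructor
  · rintro ⟨-, -, h3, -⟩ k
    rcases h3 k with h | h | h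
    exacts [Or.inl h, absurd h (by decide), Or.inr h]
  · intro h
    refine ⟨Or.inr (Or.inl (by decide)), Or.inr (Or.inl (by decide)), fun i => ?_,
      fun i => Or.inr (Or.inl (by decide))⟩
    rcases h i with h | h
    exacts [Or.inl h, Or.inr (Or.inr h)]

lemma cond_empty (f : Fin n → Finset (Fin 2)) :
    Cond ∅ f ↔ (∀ k, f k ∈ t0) ∧ (∃ i, (0 : Fin 2) ∈ f i) ∧ (∃ i, (1 : Fin 2) ∈ f i) := by
  simp only [Cond, Finset.notMem_empty, false_or, mem_t0]
  constructor
  · rintro ⟨e0, e1, h3, -⟩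
    exact ⟨h3, e0, e1⟩
  · rintro ⟨h, e0, e1⟩
    exact ⟨e0, e1, h, fun i => (h i).symm⟩

end BookAux

open BookAux Finset in
/-- For every `n ≥ 1`, `D(B_n,x) = (x²+2x)ⁿ(2x+1) + x²(x+1)^{2n} − 2xⁿ`. -/
theorem domPoly_book (n : ℕ) (hn : 1 ≤ n) :
    domPoly (bookGraph n) =
      (X ^ 2 + 2 * X) ^ n * (2 * X + 1) + X ^ 2 * (X + 1) ^ (2 * n) - 2 * X ^ n := by
  classical
  rw [domPoly]
  have step1 : ∑ S ∈ univ.filter (fun S : Finset (Fin 2 ⊕ (Fin n × Fin 2)) =>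
        (bookGraph n).IsDomSet S), (X : ℂ[X]) ^ S.card
      = ∑ p ∈ univ.filter (fun p : Finset (Fin 2) × (Fin n → Finset (Fin 2)) => Cond p.1 p.2),
          (X : ℂ[X]) ^ p.1.card * ∏ k, (X : ℂ[X]) ^ (p.2 k).card := by
    refine Finset.sum_nbij' Psi (fun p => Phi p.1 p.2) ?_ ?_ ?_ ?_ ?_
    · intro S hS
      simp only [mem_filter, mem_univ, true_and] at hS ⊢
      rw [← Phi_Psi S] at hS
      exact (isDomSet_Phi _ _).mp hS
    · intro p hp
      simp only [mem_filter, mem_univ, true_and] at hp ⊢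
      exact (isDomSet_Phi _ _).mpr hp
    · intro S _; exact Phi_Psi S
    · intro p _; exact Psi_Phi p.1 p.2
    · intro S _
      calc (X : ℂ[X]) ^ S.card = X ^ (Phi (Psi S).1 (Psi S).2).card := by rw [Phi_Psi]
        _ = _ := by rw [card_Phi, pow_add, ← Finset.prod_pow_eq_pow_sum]
  rw [step1, Finset.sum_filter, Fintype.sum_prod_type,
    show (univ : Finset (Finset (Fin 2))) = {∅, {0}, {1}, {0, 1}} by decide,
    Finset.sum_insert (by decide), Finset.sum_insert (by decide), Finset.sum_insert (by decide),
    Finset.sum_singleton]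
  have h01 : ∑ f : Fin n → Finset (Fin 2),
      (if Cond {0, 1} f then (X : ℂ[X]) ^ ({0, 1} : Finset (Fin 2)).card * ∏ k, X ^ (f k).card
        else 0) = X ^ 2 * (X + 1) ^ (2 * n) := by
    simp only [fun f => iff_true_intro (cond_01 (n := n) f), if_true]
    rw [← Finset.mul_sum, ← Fintype.piFinset_univ, sum_pi, hR, ← pow_mul,
      show ({0, 1} : Finset (Fin 2)).card = 2 from by decide]
  have h0 : ∑ f : Fin n → Finset (Fin 2),
      (if Cond {0} f then (X : ℂ[X]) ^ ({0} : Finset (Fin 2)).card * ∏ k, X ^ (f k).card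
        else 0) = X * (X ^ 2 + 2 * X) ^ n := by
    simp only [cond_0]
    rw [← Finset.sum_filter, filter_pi, ← Finset.mul_sum, sum_pi, hQ,
      show ({0} : Finset (Fin 2)).card = 1 from by decide, pow_one]
  have h1 : ∑ f : Fin n → Finset (Fin 2),
      (if Cond {1} f then (X : ℂ[X]) ^ ({1} : Finset (Fin 2)).card * ∏ k, X ^ (f k).card
        else 0) = X * (X ^ 2 + 2 * X) ^ n := by
    simp only [cond_1]
    rw [← Finset.sum_filter, filter_pi, ← Finset.mul_sum, sum_pi, hQ,
      show ({1} : Finset (Fin 2)).card = 1 from by decide, pow_one]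
  have hE : ∑ f : Fin n → Finset (Fin 2),
      (if Cond ∅ f then (X : ℂ[X]) ^ (∅ : Finset (Fin 2)).card * ∏ k, X ^ (f k).card
        else 0) = (X ^ 2 + 2 * X) ^ n - 2 * X ^ n := by
    simp only [cond_empty, Finset.card_empty, pow_zero, one_mul]
    rw [← Finset.sum_filter]
    have hsplit : univ.filter (fun f : Fin n → Finset (Fin 2) =>
        (∀ k, f k ∈ t0) ∧ (∃ i, (0 : Fin 2) ∈ f i) ∧ (∃ i, (1 : Fin 2) ∈ f i))
        = (Fintype.piFinset (fun _ : Fin n => t0)).filter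
            (fun f => (∃ i, (0 : Fin 2) ∈ f i) ∧ (∃ i, (1 : Fin 2) ∈ f i)) := by
      ext f; simp [Fintype.mem_piFinset, and_assoc]
    rw [hsplit]
    have hbad : (Fintype.piFinset (fun _ : Fin n => t0)).filter
        (fun f => ¬ ((∃ i, (0 : Fin 2) ∈ f i) ∧ (∃ i, (1 : Fin 2) ∈ f i)))
        = {fun _ => ({1} : Finset (Fin 2)), fun _ => ({0} : Finset (Fin 2))} := by
      ext f
      simp only [mem_filter, Fintype.mem_piFinset, mem_insert, mem_singleton, not_and_or,
        not_exists]
      constructor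
      · rintro ⟨ht, h | h⟩
        · left; funext k
          have h1 : ∀ s : Finset (Fin 2), s ∈ t0 → (0 : Fin 2) ∉ s → s = {1} := by decide
          exact h1 _ (ht k) (h k)
        · right; funext k
          have h1 : ∀ s : Finset (Fin 2), s ∈ t0 → (1 : Fin 2) ∉ s → s = {0} := by decide
          exact h1 _ (ht k) (h k)
      · rintro (rfl | rfl)
        · exact ⟨fun k => by simp [t0], Or.inl fun k => by simp⟩
        · exact ⟨fun k => by simp [t0], Or.inr fun k => by simp⟩
    have hne : (fun _ : Fin n => ({1} : Finset (Fin 2))) ≠ (fun _ => ({0} : Finset (Fin 2))) := by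
      intro h
      have := congrFun h ⟨0, hn⟩
      exact absurd this (by decide)
    have := Finset.sum_filter_add_sum_filter_not (Fintype.piFinset (fun _ : Fin n => t0))
      (fun f => (∃ i, (0 : Fin 2) ∈ f i) ∧ (∃ i, (1 : Fin 2) ∈ f i))
      (fun f => ∏ k, (X : ℂ[X]) ^ (f k).card)
    rw [hbad, Finset.sum_pair hne, sum_pi, hQ] at this
    simp only [Finset.card_singleton, pow_one, Finset.prod_const, Finset.card_univ,
      Fintype.card_fin] at this
    linear_combination this
  rw [h01, h0, h1, hE]
  ring
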